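/- arXiv:1510.08307 — 3 statements merged into one kernel-verified Lean document; each statement's English description precedes it below -/
import Mathlib

section
/- With t = α+β+γ, the identity 1 + dim Y(α) + dim Y(β) + dim Y(γ) = δ(δ+1)/2 holds, where δ = -(2t-α)(2t-β)(2t-γ)/(αβγ) and dim Y(α) = t(2t-β)(2t-γ)(t+β)(t+γ)(2t-3α)/(α²βγ(α-β)(α-γ)), with dim Y(β), dim Y(γ) defined by the corresponding permutations of (α,β,γ). -/
set_option maxHeartbeats 4000000 in
/-- Symmetric-square accounting in the Vogel plane. -/
theorem vogel_symmetric_square {F : Type*} [Field F] [CharZero F]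
    (α β γ t δ Yα Yβ Yγ : F)
    (hα : α ≠ 0) (hβ : β ≠ 0) (hγ : γ ≠ 0)
    (hαβ : α - β ≠ 0) (hβγ : β - γ ≠ 0) (hαγ : α - γ ≠ 0)
    (ht : t = α + β + γ)
    (hδ : δ = -((2*t - α) * (2*t - β) * (2*t - γ)) / (α * β * γ))
    (hYα : Yα = t * (2*t - β) * (2*t - γ) * (t + β) * (t + γ) * (2*t - 3*α) /
      (α^2 * β * γ * (α - β) * (α - γ)))
    (hYβ : Yβ = t * (2*t - α) * (2*t - γ) * (t + α) * (t + γ) * (2*t - 3*β) /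
      (β^2 * α * γ * (β - α) * (β - γ)))
    (hYγ : Yγ = t * (2*t - α) * (2*t - β) * (t + α) * (t + β) * (2*t - 3*γ) /
      (γ^2 * α * β * (γ - α) * (γ - β))) :
    1 + Yα + Yβ + Yγ = δ * (δ + 1) / 2 := by
  have hβα : β - α ≠ 0 := fun h => hαβ (by linear_combination -h)
  have hγα : γ - α ≠ 0 := fun h => hαγ (by linear_combination -h)
  have hγβ : γ - β ≠ 0 := fun h => hβγ (by linear_combination -h)
  have hYα' : Yα * (α^2 * β * γ * (α - β) * (α - γ)) =
      t * (2*t - β) * (2*t - γ) * (t + β) * (t + γ) * (2*t - 3*α) := by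
    rw [hYα, div_mul_cancel₀]
    exact mul_ne_zero (mul_ne_zero (mul_ne_zero (mul_ne_zero (pow_ne_zero _ hα) hβ) hγ) hαβ) hαγ
  have hYβ' : Yβ * (β^2 * α * γ * (β - α) * (β - γ)) =
      t * (2*t - α) * (2*t - γ) * (t + α) * (t + γ) * (2*t - 3*β) := by
    rw [hYβ, div_mul_cancel₀]
    exact mul_ne_zero (mul_ne_zero (mul_ne_zero (mul_ne_zero (pow_ne_zero _ hβ) hα) hγ) hβα) hβγ
  have hYγ' : Yγ * (γ^2 * α * β * (γ - α) * (γ - β)) =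
      t * (2*t - α) * (2*t - β) * (t + α) * (t + β) * (2*t - 3*γ) := by
    rw [hYγ, div_mul_cancel₀]
    exact mul_ne_zero (mul_ne_zero (mul_ne_zero (mul_ne_zero (pow_ne_zero _ hγ) hα) hβ) hγα) hγβ
  have hδ' : δ * (α * β * γ) = -((2*t - α) * (2*t - β) * (2*t - γ)) := by
    rw [hδ, div_mul_cancel₀]
    exact mul_ne_zero (mul_ne_zero hα hβ) hγ
  have hP : (2 * (α*β*γ)^2 * ((α-β)*(β-γ)*(α-γ))) ≠ 0 := by
    apply mul_ne_zero (mul_ne_zero two_ne_zero (pow_ne_zero _ (mul_ne_zero (mul_ne_zero hα hβ) hγ)))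
    exact mul_ne_zero (mul_ne_zero hαβ hβγ) hαγ
  apply mul_right_cancel₀ hP
  subst ht
  linear_combination 2*β*γ*(β-γ)*hYα' + (-2*α*γ*(α-γ))*hYβ' + 2*α*β*(α-β)*hYγ' -
    ((α-β)*(β-γ)*(α-γ))*(δ*α*β*γ - ((2*(α+β+γ)-α)*(2*(α+β+γ)-β)*(2*(α+β+γ)-γ)) + α*β*γ)*hδ'
end

section
/- Let K, w be elements of an associative ℚ-algebra satisfying K² = 2tK, wK = (4t³ - (3/2)ω)K = Kw, and ω w² = -(3/2)pω w + (4t³-(3/2)ω)((1/2)ωt² - (3/4)sω)K, where t, s, p, ω are central scalars with t, ω invertible. Define E = (2t² - (3/4)(ω/t))K - w. Then E² = (3/2)pE. -/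
/-- Kneissler's relations imply `E² = (3/2)pE` for `E = (2t² - (3/4)(ω/t))K - w`. -/
theorem kneissler_E_square {R A : Type*} [CommRing R] [Algebra ℚ R]
    [Ring A] [Algebra R A]
    (t s p ω : R) [Invertible t] [Invertible ω] (K w E : A)
    (h1 : K * K = (2 * t) • K)
    (h2 : w * K = (4 * t^3 - (3/2 : ℚ) • ω) • K)
    (h3 : K * w = (4 * t^3 - (3/2 : ℚ) • ω) • K)
    (h4 : ω • (w * w) =
      (-((3/2 : ℚ) • (p * ω))) • w +
      ((4 * t^3 - (3/2 : ℚ) • ω) * ((1/2 : ℚ) • (ω * t^2) - (3/4 : ℚ) • (s * ω))) • K)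
    (hE : E = (2 * t^2 - (3/4 : ℚ) • (ω * ⅟t)) • K - w) :
    E * E = ((3/2 : ℚ) • p) • E := by
  have hsd : ∀ (x : ℚ) (r : R), x • r = algebraMap ℚ R x * r :=
    fun x r => Algebra.smul_def x r
  set u : R := algebraMap ℚ R (1/4) with hu_def
  have hu : (4 : R) * u = 1 := by
    rw [hu_def, show (4:R) = algebraMap ℚ R 4 from (map_ofNat _ 4).symm, ← map_mul]
    norm_num
  have h32 : algebraMap ℚ R (3/2) = 6 * u := by
    rw [hu_def, show (6:R) = algebraMap ℚ R 6 from (map_ofNat _ 6).symm, ← map_mul]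
    norm_num
  have h34 : algebraMap ℚ R (3/4) = 3 * u := by
    rw [hu_def, show (3:R) = algebraMap ℚ R 3 from (map_ofNat _ 3).symm, ← map_mul]
    norm_num
  have h12 : algebraMap ℚ R (1/2) = 2 * u := by
    rw [hu_def, show (2:R) = algebraMap ℚ R 2 from (map_ofNat _ 2).symm, ← map_mul]
    norm_num
  simp only [hsd, h32, h34, h12] at h2 h3 h4 hE ⊢
  have ht : t * ⅟t = 1 := mul_invOf_self t
  have hω : ω * ⅟ω = 1 := mul_invOf_self ω
  -- w * w with the ω cancelled
  have hw2 : w * w = (-(6 * u * p)) • w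
      + ((4 * t^3 - 6 * u * ω) * (2 * u * t^2 - 3 * u * s)) • K := by
    have h4' := congrArg (fun z => ⅟ω • z) h4
    simp only [smul_smul, invOf_mul_self, one_smul, smul_add] at h4'
    rw [h4']
    congr 1
    · congr 1
      linear_combination (-(6 * u * p)) * hω
    · congr 1
      linear_combination ((4 * t^3 - 6 * u * ω) * (2 * u * t^2 - 3 * u * s)) * hω
  -- associativity consequence: (w*w)*K = w*(w*K)
  have e1 : w * w * K = w * (w * K) := mul_assoc w w K
  rw [hw2, h2, add_mul, smul_mul_assoc, smul_mul_assoc, h2, h1, smul_smul, smul_smul,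
    mul_smul_comm, h2, smul_smul] at e1
  have e2 : ((4 * t^3 - 6 * u * ω) * (4 * t^3 - 6 * u * ω)
      - (-(6 * u * p) * (4 * t^3 - 6 * u * ω)
        + (4 * t^3 - 6 * u * ω) * (2 * u * t^2 - 3 * u * s) * (2 * t))) • K = 0 := by
    rw [sub_smul, add_smul, e1]
    exact sub_self _
  have hK0 : ((2 * t^2 - 3 * u * (ω * ⅟t))
      * (3 * t^3 - 6 * u * ω + 6 * u * p + 6 * u * (s * t))) • K = 0 := by
    have hcY : (2 * t^2 - 3 * u * (ω * ⅟t))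
        * (3 * t^3 - 6 * u * ω + 6 * u * p + 6 * u * (s * t))
        = (⅟t * (2 * u)) * ((4 * t^3 - 6 * u * ω) * (4 * t^3 - 6 * u * ω)
          - (-(6 * u * p) * (4 * t^3 - 6 * u * ω)
            + (4 * t^3 - 6 * u * ω) * (2 * u * t^2 - 3 * u * s) * (2 * t))) := by
      linear_combination
        (2 * u * ⅟t * (4 * t^3 - 6 * u * ω) * t^3
          - (3 * t^3 - 6 * u * ω + 6 * u * p + 6 * u * (s * t))
            * (2 * t^2 - 3 * u * (ω * ⅟t))) * hu
        + (-((3 * t^3 - 6 * u * ω + 6 * u * p + 6 * u * (s * t))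
            * (4 * u * (2 * t^2 - 3 * u * (ω * ⅟t)) + 12 * u^2 * ω * ⅟t))) * ht
    rw [hcY, mul_smul, e2, smul_zero]
  -- expand E * E
  rw [hE]
  have key : ((2 * t^2 - 3 * u * (ω * ⅟t)) • K - w) * ((2 * t^2 - 3 * u * (ω * ⅟t)) • K - w)
      = (6 * u * p) • ((2 * t^2 - 3 * u * (ω * ⅟t)) • K - w)
        + ((2 * t * ((2 * t^2 - 3 * u * (ω * ⅟t)) * (2 * t^2 - 3 * u * (ω * ⅟t)))
            - 2 * ((2 * t^2 - 3 * u * (ω * ⅟t)) * (4 * t^3 - 6 * u * ω))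
            + (4 * t^3 - 6 * u * ω) * (2 * u * t^2 - 3 * u * s)
            - 6 * u * p * (2 * t^2 - 3 * u * (ω * ⅟t)))) • K := by
    simp only [sub_mul, mul_sub, smul_mul_assoc, mul_smul_comm, h1, h2, h3, hw2,
      smul_add, smul_sub, smul_smul]
    match_scalars <;> ring
  rw [key]
  have hΔ : (2 * t * ((2 * t^2 - 3 * u * (ω * ⅟t)) * (2 * t^2 - 3 * u * (ω * ⅟t)))
        - 2 * ((2 * t^2 - 3 * u * (ω * ⅟t)) * (4 * t^3 - 6 * u * ω))
        + (4 * t^3 - 6 * u * ω) * (2 * u * t^2 - 3 * u * s)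
        - 6 * u * p * (2 * t^2 - 3 * u * (ω * ⅟t)))
      = -((2 * t^2 - 3 * u * (ω * ⅟t))
        * (3 * t^3 - 6 * u * ω + 6 * u * p + 6 * u * (s * t))) := by
    linear_combination (t^3 * (2 * t^2 - 3 * u * (ω * ⅟t))) * hu
      + (-6 * u * ω * (2 * t^2 - 3 * u * (ω * ⅟t)) + 6 * u * ω * (2 * u * t^2 - 3 * u * s)) * ht
  rw [hΔ, neg_smul, hK0, neg_zero, add_zero]
end

section
/- In the extended Vogel plane with t = α+β+γ, the identity 1 + dim L + dim X + dim Y(α) + dim Y(β) + dim Y(γ) = δ² holds, where δ = -(τ+t-α)(τ+t-β)(τ+t-γ)/(αβγ), dim L = δ(τ+t)/(2τ), dim X = -δ(γ+τ)(β+τ)(α+τ)(τ+t)/(2αβγτ), and dim Y(α) = (α+γ+τ)(α+β+τ)(γ+τ)(β+τ)(τ+t)(τ+t-3α)/(2α²βγ(α-γ)(α-β)) and cyclically for β, γ. That is, V ⊗ V ≅ 1 ⊕ L ⊕ X ⊕ Y(α) ⊕ Y(β) ⊕ Y(γ) is consistent on dimensions. -/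
set_option maxHeartbeats 2000000


/-- The dimension sum identity for the extended Vogel plane:
`V ⊗ V ≅ 1 ⊕ L ⊕ X ⊕ Y(α) ⊕ Y(β) ⊕ Y(γ)` is consistent on dimensions. -/
theorem extended_vogel_dimension_sum {F : Type*} [Field F] [CharZero F]
    (α β γ τ t δ dL dX Yα Yβ Yγ : F)
    (hα : α ≠ 0) (hβ : β ≠ 0) (hγ : γ ≠ 0) (hτ : τ ≠ 0)
    (hαβ : α - β ≠ 0) (hβγ : β - γ ≠ 0) (hαγ : α - γ ≠ 0)
    (ht : t = α + β + γ)
    (hδ : δ = -((τ + t - α) * (τ + t - β) * (τ + t - γ)) / (α * β * γ))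
    (hL : dL = δ * (τ + t) / (2 * τ))
    (hX : dX = -δ * ((γ + τ) * (β + τ) * (α + τ) * (τ + t)) / (2 * α * β * γ * τ))
    (hYα : Yα = (α + γ + τ) * (α + β + τ) * (γ + τ) * (β + τ) * (τ + t) * (τ + t - 3*α) /
      (2 * α^2 * β * γ * (α - γ) * (α - β)))
    (hYβ : Yβ = (β + γ + τ) * (β + α + τ) * (γ + τ) * (α + τ) * (τ + t) * (τ + t - 3*β) /
      (2 * β^2 * α * γ * (β - γ) * (β - α)))
    (hYγ : Yγ = (γ + β + τ) * (γ + α + τ) * (β + τ) * (α + τ) * (τ + t) * (τ + t - 3*γ) /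
      (2 * γ^2 * α * β * (γ - β) * (γ - α))) :
    1 + dL + dX + Yα + Yβ + Yγ = δ^2 := by
  subst ht
  have hDδ : α * β * γ ≠ 0 := by simp [hα, hβ, hγ]
  have hDL : (2 : F) * τ ≠ 0 := by simp [hτ]
  have hDX : 2 * α * β * γ * τ ≠ 0 := by simp [hα, hβ, hγ, hτ]
  have hβα : β - α ≠ 0 := fun h => hαβ (by linear_combination -h)
  have hγβ : γ - β ≠ 0 := fun h => hβγ (by linear_combination -h)
  have hγα : γ - α ≠ 0 := fun h => hαγ (by linear_combination -h)
  have hDα : 2 * α^2 * β * γ * (α - γ) * (α - β) ≠ 0 := by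
    apply mul_ne_zero; apply mul_ne_zero; apply mul_ne_zero; apply mul_ne_zero
    · simp [hα]
    all_goals assumption
  have hDβ : 2 * β^2 * α * γ * (β - γ) * (β - α) ≠ 0 := by
    apply mul_ne_zero; apply mul_ne_zero; apply mul_ne_zero; apply mul_ne_zero
    · simp [hβ]
    all_goals assumption
  have hDγ : 2 * γ^2 * α * β * (γ - β) * (γ - α) ≠ 0 := by
    apply mul_ne_zero; apply mul_ne_zero; apply mul_ne_zero; apply mul_ne_zero
    · simp [hγ]
    all_goals assumption
  rw [eq_div_iff hDδ] at hδ
  rw [eq_div_iff hDL] at hL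
  rw [eq_div_iff hDX] at hX
  rw [eq_div_iff hDα] at hYα
  rw [eq_div_iff hDβ] at hYβ
  rw [eq_div_iff hDγ] at hYγ
  set t := α + β + γ with ht
  have hD : 2 * α^2 * β^2 * γ^2 * τ * ((α - β) * (β - γ) * (α - γ)) ≠ 0 :=
    mul_ne_zero (mul_ne_zero (mul_ne_zero (mul_ne_zero (mul_ne_zero two_ne_zero
      (pow_ne_zero 2 hα)) (pow_ne_zero 2 hβ)) (pow_ne_zero 2 hγ)) hτ)
      (mul_ne_zero (mul_ne_zero hαβ hβγ) hαγ)
  apply mul_right_cancel₀ hD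
  have E := (α - β) * (β - γ) * (α - γ)
  linear_combination
    (α^2 * β^2 * γ^2 * ((α - β) * (β - γ) * (α - γ))) * hL
    + (α * β * γ * ((α - β) * (β - γ) * (α - γ))) * hX
    + (β * γ * τ * (β - γ)) * hYα
    + (-(α * γ * τ * (α - γ))) * hYβ
    + (α * β * τ * (α - β)) * hYγ
    + (-(2 * α * β * γ * τ * ((α - β) * (β - γ) * (α - γ))) * δ
        + ((α - β) * (β - γ) * (α - γ)) *
          ((τ + t) * (α * β * γ - (α + τ) * (β + τ) * (γ + τ))
            + 2 * τ * ((τ + β + γ) * (τ + α + γ) * (τ + α + β)))) * hδ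
end
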